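/- In the game NimG-RM played on an undirected graph where the weight function is constant equal to 1, the misère-convention game starting at vertex u is identical (has the same game tree and same winner) to the normal-play game of Vertex Geography on the same undirected graph starting at u. Consequently, with all weights 1, (G,u,w) is a misère first-player win in NimG-RM if and only if (G,u) is a normal-play first-player win in undirected Vertex Geography, which holds if and only if every maximum matching of G covers u. -/

import Mathlib

universe u
mutual
  inductive GNormalWin {α : Type u} (moves : α → α → Prop) : α → Prop
    | step {p q : α} : moves p q → GNormalLose moves q → GNormalWin moves p
  inductive GNormalLose {α : Type u} (moves : α → α → Prop) : α → Prop
    | intro {p : α} : (∀ q, moves p q → GNormalWin moves q) → GNormalLose moves p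
end

mutual
  inductive GMisereWin {α : Type u} (moves : α → α → Prop) : α → Prop
    | terminal {p : α} : (∀ q, ¬ moves p q) → GMisereWin moves p
    | step {p q : α} : moves p q → GMisereLose moves q → GMisereWin moves p
  inductive GMisereLose {α : Type u} (moves : α → α → Prop) : α → Prop
    | intro {p q₀ : α} : moves p q₀ → (∀ q, moves p q → GMisereWin moves q) → GMisereLose moves p
end

def nimMove {V : Type u} (adj : V → V → Prop) (p q : V × (V → ℕ)) : Prop :=
  adj p.1 q.1 ∧ q.2 p.1 < p.2 p.1 ∧ ∀ v, v ≠ p.1 → q.2 v = p.2 v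

mutual
  inductive NimRMWin {V : Type u} (adj : V → V → Prop) : V × (V → ℕ) → Prop
    | zero {p} : p.2 p.1 = 0 → NimRMWin adj p
    | step {p q} : nimMove adj p q → NimRMLose adj q → NimRMWin adj p
  inductive NimRMLose {V : Type u} (adj : V → V → Prop) : V × (V → ℕ) → Prop
    | intro {p} : p.2 p.1 ≠ 0 → (∀ q, nimMove adj p q → NimRMWin adj q) → NimRMLose adj p
end

def vgMove {V : Type u} (A : V → V → Prop) (p q : Set V × V) : Prop :=
  A p.2 q.2 ∧ q.2 ∈ p.1 ∧ q.2 ≠ p.2 ∧ q.1 = p.1 \ {p.2}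

def addOut {V : Type u} (A : V → V → Prop) : V ⊕ V → V ⊕ V → Prop
  | .inl a, .inl b => A a b
  | .inl a, .inr b => a = b
  | _, _ => False

def MaxMatching {V : Type u} (G : SimpleGraph V) (M : G.Subgraph) : Prop :=
  M.IsMatching ∧ ∀ N : G.Subgraph, N.IsMatching → N.edgeSet.ncard ≤ M.edgeSet.ncard

/-!
With all weights equal to 1, a NimG-RM move must empty the current vertex, so a position is the
token together with the support of the weights, and moving onto an emptied vertex hands the
opponent an immediate misère win: the game is Vertex Geography on that support. Both games are
then governed by the recursion satisfied by "`v` is covered by every maximum matching of `G[S]`":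
this holds iff `v` has a neighbour `w ∈ S` missed by some maximum matching of `G[S \ {v}]`
(remove the matching edge at `v`; conversely, add the edge `vw`).
-/

theorem gNormal_iff_of_wellFounded {α : Type*} {moves : α → α → Prop}
    (hwf : WellFounded (flip moves)) {P : α → Prop}
    (hP : ∀ p, P p ↔ ∃ q, moves p q ∧ ¬P q) (p : α) :
    (GNormalWin moves p ↔ P p) ∧ (GNormalLose moves p ↔ ¬P p) := by
  induction p using hwf.induction with
  | _ p ih =>
  rw [hP p]
  refine ⟨⟨?_, ?_⟩, ⟨?_, ?_⟩⟩
  · rintro ⟨hpq, hq⟩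
    exact ⟨_, hpq, (ih _ hpq).2.1 hq⟩
  · rintro ⟨q, hpq, hq⟩
    exact .step hpq ((ih q hpq).2.2 hq)
  · rintro ⟨hwin⟩ ⟨q, hpq, hq⟩
    exact hq ((ih q hpq).1.1 (hwin q hpq))
  · intro h
    exact .intro fun q hpq => (ih q hpq).1.2 (by_contra fun hq => h ⟨q, hpq, hq⟩)

theorem nimRM_iff_of_wellFounded {V : Type*} {adj : V → V → Prop}
    (hwf : WellFounded (flip (nimMove adj))) {I P : V × (V → ℕ) → Prop}
    (hI : ∀ p q, I p → nimMove adj p q → I q)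
    (hP : ∀ p, I p → (P p ↔ p.2 p.1 = 0 ∨ ∃ q, nimMove adj p q ∧ ¬P q))
    (p : V × (V → ℕ)) (hp : I p) :
    (NimRMWin adj p ↔ P p) ∧ (NimRMLose adj p ↔ ¬P p) := by
  induction p using hwf.induction with
  | _ p ih =>
  have ih' := fun q hpq => ih q hpq (hI p q hp hpq)
  rw [hP p hp]
  refine ⟨⟨?_, ?_⟩, ⟨?_, ?_⟩⟩
  · rintro (h0 | ⟨hpq, hq⟩)
    · exact .inl h0
    · exact .inr ⟨_, hpq, (ih' _ hpq).2.1 hq⟩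
  · rintro (h0 | ⟨q, hpq, hq⟩)
    · exact .zero h0
    · exact .step hpq ((ih' q hpq).2.2 hq)
  · rintro ⟨h0, hwin⟩ (h0' | ⟨q, hpq, hq⟩)
    · exact h0 h0'
    · exact hq ((ih' q hpq).1.1 (hwin q hpq))
  · intro h
    obtain ⟨h0, hmoves⟩ := not_or.mp h
    exact .intro h0 fun q hpq => (ih' q hpq).1.2 (by_contra fun hq => hmoves ⟨q, hpq, hq⟩)

theorem wellFounded_flip_vgMove {V : Type*} [Finite V] (A : V → V → Prop) :
    WellFounded (flip (vgMove A)) :=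
  (measure fun p : Set V × V => (p.1 \ {p.2}).ncard).wf.mono fun q p ⟨_, hq, hne, hq1⟩ => by
    change ((q.1 \ {q.2}).ncard < (p.1 \ {p.2}).ncard)
    rw [hq1]
    exact Set.ncard_sdiff_singleton_lt_of_mem ⟨hq, hne⟩

theorem wellFounded_flip_nimMove {V : Type*} [Fintype V] (adj : V → V → Prop) :
    WellFounded (flip (nimMove adj)) :=
  (measure fun p : V × (V → ℕ) => ∑ x, p.2 x).wf.mono fun _ p ⟨_, hlt, heq⟩ =>
    Finset.sum_lt_sum (fun x _ => (eq_or_ne x p.1).elim (· ▸ hlt.le) (heq x · |>.le))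
      ⟨p.1, Finset.mem_univ _, hlt⟩

namespace SimpleGraph

variable {V : Type*} {G : SimpleGraph V}

namespace Subgraph

theorem IsMatching.deleteVerts {M : G.Subgraph} (hM : M.IsMatching) {s : Set V}
    (hs : ∀ ⦃a b⦄, M.Adj a b → b ∈ s → a ∈ s) : (M.deleteVerts s).IsMatching := by
  intro a ha
  rw [deleteVerts_verts] at ha
  obtain ⟨b, hab, huniq⟩ := hM ha.1
  have hb : b ∉ s := fun hb => ha.2 (hs hab hb)
  exact ⟨b, deleteVerts_adj.mpr ⟨ha.1, ha.2, M.edge_vert hab.symm, hb, hab⟩,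
    fun c hc => huniq c (deleteVerts_adj.mp hc).2.2.2.2⟩

theorem IsMatching.mem_pair_of_adj {M : G.Subgraph} (hM : M.IsMatching) {v w a b : V}
    (hvw : M.Adj v w) (hab : M.Adj a b) (hb : b ∈ ({v, w} : Set V)) : a ∈ ({v, w} : Set V) := by
  rcases hb with rfl | rfl
  · exact .inr (hM.eq_of_adj_right hab hvw.symm)
  · exact .inl (hM.eq_of_adj_right hab hvw)

theorem IsMatching.deleteVerts_pair {M : G.Subgraph} (hM : M.IsMatching) {v w : V}
    (hvw : M.Adj v w) : (M.deleteVerts {v, w}).IsMatching :=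
  hM.deleteVerts fun _ _ => hM.mem_pair_of_adj hvw

theorem IsMatching.edgeSet_subset_insert_deleteVerts_pair {M : G.Subgraph} (hM : M.IsMatching)
    {v w : V} (hvw : M.Adj v w) :
    M.edgeSet ⊆ insert s(v, w) (M.deleteVerts {v, w}).edgeSet := by
  intro e he
  induction e using Sym2.ind with
  | _ a b =>
  have hab : M.Adj a b := he
  by_cases hb : b ∈ ({v, w} : Set V)
  · left
    rcases hb with rfl | rfl
    · rw [hM.eq_of_adj_right hab hvw.symm, Sym2.eq_swap]
    · rw [hM.eq_of_adj_right hab hvw]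
  · have ha : a ∉ ({v, w} : Set V) := fun ha => hb (hM.mem_pair_of_adj hvw hab.symm ha)
    exact .inr (deleteVerts_adj.mpr ⟨M.edge_vert hab, ha, M.edge_vert hab.symm, hb, hab⟩)

theorem IsMatching.sup_subgraphOfAdj {N : G.Subgraph} (hN : N.IsMatching) {v w : V}
    (hv : v ∉ N.verts) (hw : w ∉ N.verts) (h : G.Adj v w) :
    (N ⊔ G.subgraphOfAdj h).IsMatching := by
  refine hN.sup (.subgraphOfAdj h) ?_
  rw [hN.support_eq_verts]
  refine Set.disjoint_left.mpr fun x hx hx' => ?_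
  rcases (G.subgraphOfAdj h).support_subset_verts hx' with rfl | rfl
  · exact hv hx
  · exact hw hx

theorem ncard_edgeSet_sup_subgraphOfAdj [Finite V] (N : G.Subgraph) {v w : V}
    (hv : v ∉ N.verts) (h : G.Adj v w) :
    (N ⊔ G.subgraphOfAdj h).edgeSet.ncard = N.edgeSet.ncard + 1 := by
  have hvw : s(v, w) ∉ N.edgeSet := fun h' => hv (N.edge_vert h')
  rw [edgeSet_sup, edgeSet_subgraphOfAdj, Set.union_singleton, Set.ncard_insert_of_notMem hvw]

end Subgraph

variable (G)

def IsMatchingIn (S : Set V) (M : G.Subgraph) : Prop :=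
  M.IsMatching ∧ M.verts ⊆ S

def IsMaxMatchingIn (S : Set V) (M : G.Subgraph) : Prop :=
  G.IsMatchingIn S M ∧ ∀ N, G.IsMatchingIn S N → N.edgeSet.ncard ≤ M.edgeSet.ncard

def IsEssentialIn (S : Set V) (v : V) : Prop :=
  ∀ M, G.IsMaxMatchingIn S M → v ∈ M.verts

variable {G}

theorem exists_isMaxMatchingIn [Finite V] (S : Set V) : ∃ M, G.IsMaxMatchingIn S M := by
  have hbdd : BddAbove {n | ∃ M, G.IsMatchingIn S M ∧ M.edgeSet.ncard = n} :=
    ⟨G.edgeSet.ncard, by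
      rintro _ ⟨M, -, rfl⟩
      exact Set.ncard_le_ncard M.edgeSet_subset⟩
  have hne : {n | ∃ M, G.IsMatchingIn S M ∧ M.edgeSet.ncard = n}.Nonempty :=
    ⟨_, ⊥, ⟨fun _ h => h.elim, by simp⟩, rfl⟩
  obtain ⟨M, hM, hMn⟩ := Nat.sSup_mem hne hbdd
  exact ⟨M, hM, fun N hN => hMn ▸ le_csSup hbdd ⟨N, hN, rfl⟩⟩

theorem IsMaxMatchingIn.of_ncard_le {S : Set V} {M N : G.Subgraph} (hM : G.IsMaxMatchingIn S M)
    (hN : G.IsMatchingIn S N) (h : M.edgeSet.ncard ≤ N.edgeSet.ncard) :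
    G.IsMaxMatchingIn S N :=
  ⟨hN, fun K hK => (hM.2 K hK).trans h⟩

theorem isEssentialIn_iff_exists_adj [Finite V] {S : Set V} {v : V} (hv : v ∈ S) :
    G.IsEssentialIn S v ↔ ∃ w, G.Adj v w ∧ w ∈ S ∧ ¬G.IsEssentialIn (S \ {v}) w := by
  constructor
  · intro hess
    obtain ⟨M, hM⟩ := exists_isMaxMatchingIn (G := G) S
    obtain ⟨w, hvw, -⟩ := hM.1.1 (hess M hM)
    set M' := M.deleteVerts {v, w}
    have hM' : G.IsMatchingIn (S \ {v}) M' :=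
      ⟨hM.1.1.deleteVerts_pair hvw, fun x hx => ⟨hM.1.2 hx.1, fun hxv => hx.2 (.inl hxv)⟩⟩
    have hcard : M.edgeSet.ncard ≤ M'.edgeSet.ncard + 1 :=
      (Set.ncard_le_ncard (hM.1.1.edgeSet_subset_insert_deleteVerts_pair hvw)).trans
        (Set.ncard_insert_le _ _)
    refine ⟨w, M.adj_sub hvw, hM.1.2 (M.edge_vert hvw.symm), fun hw => ?_⟩
    refine (hw M' ⟨hM', fun N hN => ?_⟩).2 (.inr rfl)
    by_contra! hlt
    have hNmax : G.IsMaxMatchingIn S N :=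
      hM.of_ncard_le ⟨hN.1, hN.2.trans Set.sdiff_subset⟩ (by omega)
    exact (hN.2 (hess N hNmax)).2 rfl
  · rintro ⟨w, hvw, hwS, hw⟩ M hM
    obtain ⟨N, hN, hwN⟩ : ∃ N, G.IsMaxMatchingIn (S \ {v}) N ∧ w ∉ N.verts := by
      simpa [IsEssentialIn] using hw
    by_contra hvM
    have hvN : v ∉ N.verts := fun h => (hN.1.2 h).2 rfl
    have hK : G.IsMatchingIn S (N ⊔ G.subgraphOfAdj hvw) := by
      refine ⟨hN.1.1.sup_subgraphOfAdj hvN hwN hvw, ?_⟩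
      rw [Subgraph.verts_sup, subgraphOfAdj_verts]
      exact Set.union_subset (hN.1.2.trans Set.sdiff_subset)
        (Set.insert_subset hv (Set.singleton_subset_iff.mpr hwS))
    have h1 := hN.2 M ⟨hM.1.1, fun x hx => ⟨hM.1.2 hx, fun hxv => hvM (hxv ▸ hx)⟩⟩
    have h2 := hM.2 _ hK
    rw [Subgraph.ncard_edgeSet_sup_subgraphOfAdj N hvN] at h2
    omega

theorem isMaxMatchingIn_univ {M : G.Subgraph} :
    G.IsMaxMatchingIn Set.univ M ↔ MaxMatching G M := by
  simp [IsMaxMatchingIn, IsMatchingIn, MaxMatching]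

end SimpleGraph

/-- The vertex under the token is deleted when the token leaves it, so it does not matter whether
it is listed among the available vertices. -/
theorem gNormal_vgMove_iff_isEssentialIn {V : Type*} [Finite V] (G : SimpleGraph V)
    (p : Set V × V) :
    (GNormalWin (vgMove G.Adj) p ↔ G.IsEssentialIn (insert p.2 p.1) p.2) ∧
      (GNormalLose (vgMove G.Adj) p ↔ ¬G.IsEssentialIn (insert p.2 p.1) p.2) := by
  refine gNormal_iff_of_wellFounded (wellFounded_flip_vgMove _)
    (P := fun p => G.IsEssentialIn (insert p.2 p.1) p.2) (fun ⟨S, v⟩ => ?_) p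
  have hdel : insert v S \ {v} = S \ {v} := Set.insert_sdiff_of_mem S rfl
  dsimp only
  rw [SimpleGraph.isEssentialIn_iff_exists_adj (Set.mem_insert v S)]
  constructor
  · rintro ⟨w, hvw, hw, hess⟩
    have hwS : w ∈ S \ {v} := ⟨hw.resolve_left hvw.ne', hvw.ne'⟩
    refine ⟨(S \ {v}, w), ⟨hvw, hwS.1, hwS.2, rfl⟩, ?_⟩
    rwa [Set.insert_eq_of_mem hwS, ← hdel]
  · rintro ⟨⟨T, w⟩, ⟨hvw, hwS, hwv, rfl⟩, hess⟩
    refine ⟨w, hvw, .inr hwS, ?_⟩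
    rwa [Set.insert_eq_of_mem (show w ∈ S \ {v} from ⟨hwS, hwv⟩), ← hdel] at hess

theorem nimMove_iff_of_le_one {V : Type*} [DecidableEq V] {adj : V → V → Prop} {v : V}
    {f : V → ℕ} (hf : ∀ x, f x ≤ 1) (hv : f v ≠ 0) {q : V × (V → ℕ)} :
    nimMove adj (v, f) q ↔ adj v q.1 ∧ q.2 = Function.update f v 0 := by
  obtain ⟨w, g⟩ := q
  constructor
  · rintro ⟨hvw, hlt, heq⟩
    refine ⟨hvw, funext fun x => ?_⟩
    rcases eq_or_ne x v with rfl | hx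
    · have := hf x
      dsimp only at hlt
      simp only [Function.update_self]
      omega
    · exact (heq x hx).trans (Function.update_of_ne hx _ _).symm
  · rintro ⟨hvw, rfl⟩
    refine ⟨hvw, ?_, fun x hx => Function.update_of_ne hx _ _⟩
    simpa [Nat.pos_iff_ne_zero] using hv

theorem nimRM_iff_isEssentialIn {V : Type*} [Fintype V] (G : SimpleGraph V)
    (p : V × (V → ℕ)) (hp : ∀ x, p.2 x ≤ 1) :
    (NimRMWin G.Adj p ↔ p.2 p.1 = 0 ∨ G.IsEssentialIn (Function.support p.2) p.1) ∧
      (NimRMLose G.Adj p ↔ ¬(p.2 p.1 = 0 ∨ G.IsEssentialIn (Function.support p.2) p.1)) := by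
  classical
  refine nimRM_iff_of_wellFounded (wellFounded_flip_nimMove _) (I := fun p => ∀ x, p.2 x ≤ 1)
    (P := fun p => p.2 p.1 = 0 ∨ G.IsEssentialIn (Function.support p.2) p.1)
    ?_ ?_ p hp
  · rintro p q hp ⟨-, hlt, heq⟩ x
    rcases eq_or_ne x p.1 with rfl | hx
    · exact hlt.le.trans (hp _)
    · exact (heq x hx).le.trans (hp x)
  rintro ⟨v, f⟩ hf
  dsimp only at hf ⊢
  rcases eq_or_ne (f v) 0 with h0 | h0
  · simp only [h0, true_or]
  simp only [h0, false_or, nimMove_iff_of_le_one hf h0]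
  rw [SimpleGraph.isEssentialIn_iff_exists_adj (Function.mem_support.mpr h0)]
  constructor
  · rintro ⟨w, hvw, hw, hess⟩
    refine ⟨(w, Function.update f v 0), ⟨hvw, rfl⟩, ?_⟩
    simpa [Function.support_update_zero, Function.update_of_ne hvw.ne'] using ⟨hw, hess⟩
  · rintro ⟨⟨w, g⟩, ⟨hvw, rfl⟩, hg⟩
    simp only [Function.support_update_zero, Function.update_of_ne hvw.ne', not_or] at hg
    exact ⟨w, hvw, hg.1, hg.2⟩

/-- With all weights equal to 1, misère NimG-RM coincides with normal-play undirected
Vertex Geography: the misère NimG-RM position is a first-player win iff the normal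
Vertex Geography position is, iff every maximum matching covers `u`. -/
theorem stmt1 {V : Type} [Fintype V] (G : SimpleGraph V) (u : V) :
    (NimRMWin G.Adj (u, fun _ => 1) ↔ GNormalWin (vgMove G.Adj) (Set.univ, u)) ∧
    (NimRMWin G.Adj (u, fun _ => 1) ↔
      ∀ M : G.Subgraph, MaxMatching G M → u ∈ M.verts) := by
  have hnim : NimRMWin G.Adj (u, fun _ => 1) ↔ G.IsEssentialIn Set.univ u := by
    simpa [Function.support_const] using
      (nimRM_iff_isEssentialIn G (u, fun _ => 1) fun _ => le_rfl).1
  have hvg : GNormalWin (vgMove G.Adj) (Set.univ, u) ↔ G.IsEssentialIn Set.univ u := by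
    simpa using (gNormal_vgMove_iff_isEssentialIn G (Set.univ, u)).1
  refine ⟨hnim.trans hvg.symm, hnim.trans ?_⟩
  simp only [SimpleGraph.IsEssentialIn, SimpleGraph.isMaxMatchingIn_univ]
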